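/- arXiv:0911.3719 — 2 statements merged into one kernel-verified Lean document; each statement's English description precedes it below -/
import Mathlib

section
/- Let H be a cocommutative Hopf algebra and α any convolution-invertible two-cocycle on H. Then the generic base algebra B_H^α equals B_H^ε, the generic base algebra for the trivial cocycle. -/
open TensorProduct

noncomputable section

variable (k : Type) [Field k]

/-- Convolution product of two linear maps from a coalgebra to an algebra. -/
def conv {C A : Type} [AddCommGroup C] [Module k C] [Coalgebra k C]
    [Ring A] [Algebra k A] (f g : C →ₗ[k] A) : C →ₗ[k] A :=
  LinearMap.mul' k A ∘ₗ TensorProduct.map f g ∘ₗ Coalgebra.comul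

/-- Unit of the convolution algebra: `unit ∘ counit`. -/
def convOne {C A : Type} [AddCommGroup C] [Module k C] [Coalgebra k C]
    [Ring A] [Algebra k A] : C →ₗ[k] A :=
  Algebra.linearMap k A ∘ₗ Coalgebra.counit

section CocycleDefs

variable {H : Type} [Ring H] [HopfAlgebra k H]

/-- The two-cocycle condition `β(x₁,y₁) β(x₂y₂,z) = β(y₁,z₁) β(x,y₂z₂)` for an `A`-valued
bilinear form `β` on `H`, as an equality of linear maps on `(H ⊗ H) ⊗ H`. -/
def IsCocycle {A : Type} [CommRing A] [Algebra k A] (β : H ⊗[k] H →ₗ[k] A) : Prop :=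
  conv k (LinearMap.mul' k A ∘ₗ TensorProduct.map β (convOne k))
      (β ∘ₗ TensorProduct.map (LinearMap.mul' k H) LinearMap.id)
  = conv k
      (LinearMap.mul' k A ∘ₗ TensorProduct.map (convOne k) β
        ∘ₗ (TensorProduct.assoc k H H H).toLinearMap)
      (β ∘ₗ TensorProduct.map LinearMap.id (LinearMap.mul' k H)
        ∘ₗ (TensorProduct.assoc k H H H).toLinearMap)

/-- `β` and `βinv` are mutually inverse for the convolution product. -/
def IsConvInverse {A : Type} [CommRing A] [Algebra k A]
    (β βinv : H ⊗[k] H →ₗ[k] A) : Prop :=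
  conv k β βinv = convOne k ∧ conv k βinv β = convOne k

end CocycleDefs

variable (C : Type) [AddCommGroup C] [Module k C] [Coalgebra k C]

/-- A model of Takeuchi's free commutative Hopf algebra `S(t_C)_Θ` generated by the
coalgebra `C`, together with its generators `t_x` and `t⁻¹_x`. -/
structure TakData (T : Type) [CommRing T] [HopfAlgebra k T] where
  t : C →ₗ[k] T
  tinv : C →ₗ[k] T
  comul_t : Coalgebra.comul ∘ₗ t = TensorProduct.map t t ∘ₗ Coalgebra.comul
  counit_t : Coalgebra.counit ∘ₗ t = Coalgebra.counit
  comul_tinv : Coalgebra.comul ∘ₗ tinv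
    = TensorProduct.map tinv tinv ∘ₗ (TensorProduct.comm k C C).toLinearMap ∘ₗ Coalgebra.comul
  counit_tinv : Coalgebra.counit ∘ₗ tinv = Coalgebra.counit
  conv_t_tinv : conv k t tinv = convOne k
  conv_tinv_t : conv k tinv t = convOne k
  antipode_t : HopfAlgebra.antipode (R := k) ∘ₗ t = tinv
  antipode_tinv : HopfAlgebra.antipode (R := k) ∘ₗ tinv = t
  adjoin_eq_top : Algebra.adjoin k (Set.range ⇑t ∪ Set.range ⇑tinv) = ⊤

namespace TakData

variable {k C} {H : Type} [Ring H] [HopfAlgebra k H]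
variable {T : Type} [CommRing T] [HopfAlgebra k T] (D : TakData k H T)

/-- `x ⊗ y ↦ t_x t_y`. -/
def tt : H ⊗[k] H →ₗ[k] T := LinearMap.mul' k T ∘ₗ TensorProduct.map D.t D.t

/-- `x ⊗ y ↦ t⁻¹_{xy}`. -/
def tinvMul : H ⊗[k] H →ₗ[k] T := D.tinv ∘ₗ LinearMap.mul' k H

/-- `x ⊗ y ↦ t_{xy}`. -/
def tMul : H ⊗[k] H →ₗ[k] T := D.t ∘ₗ LinearMap.mul' k H

/-- `x ⊗ y ↦ t⁻¹_x t⁻¹_y`. -/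
def tinvtinv : H ⊗[k] H →ₗ[k] T := LinearMap.mul' k T ∘ₗ TensorProduct.map D.tinv D.tinv

/-- The generic cocycle for the trivial cocycle: `σ(x,y) = t_{x₁} t_{y₁} t⁻¹_{x₂y₂}`. -/
def sigmaEps : H ⊗[k] H →ₗ[k] T := conv k D.tt D.tinvMul

/-- Its convolution inverse: `σ⁻¹(x,y) = t_{x₁y₁} t⁻¹_{x₂} t⁻¹_{y₂}`. -/
def sigmaEpsInv : H ⊗[k] H →ₗ[k] T := conv k D.tMul D.tinvtinv

/-- The generic cocycle attached to `α`: `σ_α(x,y) = t_{x₁} t_{y₁} α(x₂,y₂) t⁻¹_{x₃y₃}`. -/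
def sigma (α : H ⊗[k] H →ₗ[k] k) : H ⊗[k] H →ₗ[k] T :=
  conv k (conv k D.tt (Algebra.linearMap k T ∘ₗ α)) D.tinvMul

/-- The inverse generic cocycle: `σ_α⁻¹(x,y) = t_{x₁y₁} α⁻¹(x₂,y₂) t⁻¹_{x₃} t⁻¹_{y₃}`. -/
def sigmaInv (αinv : H ⊗[k] H →ₗ[k] k) : H ⊗[k] H →ₗ[k] T :=
  conv k (conv k D.tMul (Algebra.linearMap k T ∘ₗ αinv)) D.tinvtinv

/-- The generic base algebra `B_H^α`: the subalgebra of `S(t_H)_Θ` generated by the values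
of the generic cocycle `σ_α` and of its inverse. -/
def genBase (α αinv : H ⊗[k] H →ₗ[k] k) : Subalgebra k T :=
  Algebra.adjoin k
    (Set.range (fun p : H × H => D.sigma α (p.1 ⊗ₜ[k] p.2)) ∪
      Set.range (fun p : H × H => D.sigmaInv αinv (p.1 ⊗ₜ[k] p.2)))

/-- The generic base algebra `B_H` for the trivial cocycle. -/
def B : Subalgebra k T :=
  Algebra.adjoin k
    (Set.range (fun p : H × H => D.sigmaEps (p.1 ⊗ₜ[k] p.2)) ∪
      Set.range (fun p : H × H => D.sigmaEpsInv (p.1 ⊗ₜ[k] p.2)))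

end TakData

section AuxLemmas

variable {k} {C A : Type} [AddCommGroup C] [Module k C] [Coalgebra k C]
  [CommRing A] [Algebra k A]

lemma conv_one_conv (f : C →ₗ[k] A) : conv k (convOne k) f = f := by
  unfold conv convOne
  have h1 : TensorProduct.map ((Algebra.linearMap k A) ∘ₗ (Coalgebra.counit (R := k) (A := C))) f
      = TensorProduct.map (Algebra.linearMap k A) f ∘ₗ
        (Coalgebra.counit (R := k) (A := C)).rTensor C :=
    (LinearMap.map_comp_rTensor _ _ _ _).symm
  rw [h1, LinearMap.comp_assoc, Coalgebra.rTensor_counit_comp_comul]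
  ext c
  simp

lemma conv_assoc (f g h : C →ₗ[k] A) :
    conv k (conv k f g) h = conv k f (conv k g h) := by
  have K : LinearMap.mul' k A ∘ₗ
        TensorProduct.map (LinearMap.mul' k A ∘ₗ TensorProduct.map f g) h
      = (LinearMap.mul' k A ∘ₗ
          TensorProduct.map f (LinearMap.mul' k A ∘ₗ TensorProduct.map g h))
        ∘ₗ (TensorProduct.assoc k C C C).toLinearMap := by
    apply TensorProduct.ext_threefold
    intro x y z
    simp [mul_assoc]
  unfold conv
  have e1 : TensorProduct.map
        ((LinearMap.mul' k A ∘ₗ TensorProduct.map f g) ∘ₗ (Coalgebra.comul (R := k))) h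
      = TensorProduct.map (LinearMap.mul' k A ∘ₗ TensorProduct.map f g) h ∘ₗ
        (Coalgebra.comul (R := k) (A := C)).rTensor C :=
    (LinearMap.map_comp_rTensor _ _ _ _).symm
  have e2 : TensorProduct.map f
        ((LinearMap.mul' k A ∘ₗ TensorProduct.map g h) ∘ₗ (Coalgebra.comul (R := k)))
      = TensorProduct.map f (LinearMap.mul' k A ∘ₗ TensorProduct.map g h) ∘ₗ
        (Coalgebra.comul (R := k) (A := C)).lTensor C :=
    (LinearMap.map_comp_lTensor _ _ _ _).symm
  simp only [← LinearMap.comp_assoc]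
  rw [e1, e2]
  simp only [← LinearMap.comp_assoc]
  rw [K]
  simp only [LinearMap.comp_assoc]
  rw [Coalgebra.coassoc]

lemma conv_comm
    (hc : (TensorProduct.comm k C C).toLinearMap ∘ₗ Coalgebra.comul
      = (Coalgebra.comul : C →ₗ[k] C ⊗[k] C))
    (f g : C →ₗ[k] A) : conv k f g = conv k g f := by
  unfold conv
  conv_lhs => rw [← hc]
  simp only [← LinearMap.comp_assoc]
  congr 1
  apply TensorProduct.ext'
  intro x y
  simp [mul_comm]

lemma algmap_conv (φ ψ : C →ₗ[k] k) :
    Algebra.linearMap k A ∘ₗ conv k φ ψ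
      = conv k (Algebra.linearMap k A ∘ₗ φ) (Algebra.linearMap k A ∘ₗ ψ) := by
  unfold conv
  simp only [← LinearMap.comp_assoc]
  congr 1
  apply TensorProduct.ext'
  intro x y
  simp

lemma algmap_convOne :
    Algebra.linearMap k A ∘ₗ (convOne k : C →ₗ[k] k) = (convOne k : C →ₗ[k] A) := by
  unfold convOne
  ext c
  simp

/-- Convolving with a scalar-valued map preserves membership in a subalgebra. -/
lemma conv_mem (S : Subalgebra k A) (φ : C →ₗ[k] k) (g : C →ₗ[k] A)
    (hg : ∀ w, g w ∈ S) (w : C) :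
    conv k (Algebra.linearMap k A ∘ₗ φ) g w ∈ S := by
  show LinearMap.mul' k A
    (TensorProduct.map (Algebra.linearMap k A ∘ₗ φ) g (Coalgebra.comul w)) ∈ S
  induction (Coalgebra.comul (R := k) w) using TensorProduct.induction_on with
  | zero => simpa using S.zero_mem
  | tmul u v =>
      have : LinearMap.mul' k A
          (TensorProduct.map (Algebra.linearMap k A ∘ₗ φ) g (u ⊗ₜ[k] v))
        = φ u • g v := by
        simp [Algebra.smul_def]
      rw [this]
      exact S.smul_mem (hg v) _
  | add a b ha hb =>
      rw [map_add, map_add]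
      exact S.add_mem ha hb

end AuxLemmas

section TensorAux

variable {k} {H : Type} [AddCommGroup H] [Module k H] [Coalgebra k H]

/-- The tensor square of a cocommutative coalgebra is cocommutative. -/
lemma cocomm_tensorSquare
    (hc : (TensorProduct.comm k H H).toLinearMap ∘ₗ Coalgebra.comul
      = (Coalgebra.comul : H →ₗ[k] H ⊗[k] H)) :
    (TensorProduct.comm k (H ⊗[k] H) (H ⊗[k] H)).toLinearMap ∘ₗ Coalgebra.comul
      = (Coalgebra.comul : H ⊗[k] H →ₗ[k] (H ⊗[k] H) ⊗[k] (H ⊗[k] H)) := by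
  have hA : (TensorProduct.comm k (H ⊗[k] H) (H ⊗[k] H)).toLinearMap ∘ₗ
        (TensorProduct.tensorTensorTensorComm k H H H H).toLinearMap
      = (TensorProduct.tensorTensorTensorComm k H H H H).toLinearMap ∘ₗ
        TensorProduct.map (TensorProduct.comm k H H).toLinearMap
          (TensorProduct.comm k H H).toLinearMap := by
    apply TensorProduct.ext_fourfold'
    intro a b c d
    simp
  have hcm : (Coalgebra.comul : H ⊗[k] H →ₗ[k] (H ⊗[k] H) ⊗[k] (H ⊗[k] H))
      = (TensorProduct.tensorTensorTensorComm k H H H H).toLinearMap ∘ₗ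
        TensorProduct.map (Coalgebra.comul (R := k)) (Coalgebra.comul (R := k)) := rfl
  rw [hcm, ← LinearMap.comp_assoc, hA, LinearMap.comp_assoc,
    ← TensorProduct.map_comp, hc]

end TensorAux

/-- For a cocommutative Hopf algebra `H` and any convolution-invertible
two-cocycle `α`, the generic base algebra `B_H^α` equals the one for the trivial cocycle. -/
theorem genBase_eq_of_cocommutative
    {H : Type} [Ring H] [HopfAlgebra k H]
    {T : Type} [CommRing T] [HopfAlgebra k T] (D : TakData k H T)
    (hcocomm : (TensorProduct.comm k H H).toLinearMap ∘ₗ Coalgebra.comul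
      = (Coalgebra.comul : H →ₗ[k] H ⊗[k] H))
    (α αinv : H ⊗[k] H →ₗ[k] k)
    (hcoc : IsCocycle k α) (hinv : IsConvInverse k α αinv) :
    D.genBase α αinv = D.B := by
  classical
  set ι : k →ₗ[k] T := Algebra.linearMap k T with hι
  have hHH : (TensorProduct.comm k (H ⊗[k] H) (H ⊗[k] H)).toLinearMap ∘ₗ Coalgebra.comul
      = (Coalgebra.comul : H ⊗[k] H →ₗ[k] (H ⊗[k] H) ⊗[k] (H ⊗[k] H)) :=
    cocomm_tensorSquare hcocomm
  -- σ_α = (ι∘α) * σ_ε   and   σ_α⁻¹ = (ι∘αinv) * σ_ε⁻¹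
  have h1 : D.sigma α = conv k (ι ∘ₗ α) D.sigmaEps := by
    rw [TakData.sigma, TakData.sigmaEps, conv_comm hHH D.tt (ι ∘ₗ α), conv_assoc]
  have h3 : D.sigmaInv αinv = conv k (ι ∘ₗ αinv) D.sigmaEpsInv := by
    rw [TakData.sigmaInv, TakData.sigmaEpsInv,
      conv_comm hHH D.tMul (ι ∘ₗ αinv), conv_assoc]
  -- σ_ε = (ι∘αinv) * σ_α   and   σ_ε⁻¹ = (ι∘α) * σ_α⁻¹
  have h2 : D.sigmaEps = conv k (ι ∘ₗ αinv) (D.sigma α) := by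
    rw [h1, ← conv_assoc, ← algmap_conv, hinv.2, algmap_convOne, conv_one_conv]
  have h4 : D.sigmaEpsInv = conv k (ι ∘ₗ α) (D.sigmaInv αinv) := by
    rw [h3, ← conv_assoc, ← algmap_conv, hinv.1, algmap_convOne, conv_one_conv]
  -- membership helpers
  have memB : ∀ w, D.sigmaEps w ∈ D.B ∧ D.sigmaEpsInv w ∈ D.B := by
    intro w
    induction w using TensorProduct.induction_on with
    | zero =>
        simp only [map_zero]
        exact ⟨Subalgebra.zero_mem _, Subalgebra.zero_mem _⟩
    | tmul x y =>
        exact ⟨Algebra.subset_adjoin (Or.inl ⟨(x, y), rfl⟩),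
          Algebra.subset_adjoin (Or.inr ⟨(x, y), rfl⟩)⟩
    | add a b ha hb =>
        rw [map_add, map_add]
        exact ⟨Subalgebra.add_mem _ ha.1 hb.1, Subalgebra.add_mem _ ha.2 hb.2⟩
  have memG : ∀ w, D.sigma α w ∈ D.genBase α αinv ∧ D.sigmaInv αinv w ∈ D.genBase α αinv := by
    intro w
    induction w using TensorProduct.induction_on with
    | zero =>
        simp only [map_zero]
        exact ⟨Subalgebra.zero_mem _, Subalgebra.zero_mem _⟩
    | tmul x y =>
        exact ⟨Algebra.subset_adjoin (Or.inl ⟨(x, y), rfl⟩),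
          Algebra.subset_adjoin (Or.inr ⟨(x, y), rfl⟩)⟩
    | add a b ha hb =>
        rw [map_add, map_add]
        exact ⟨Subalgebra.add_mem _ ha.1 hb.1, Subalgebra.add_mem _ ha.2 hb.2⟩
  apply le_antisymm
  · apply Algebra.adjoin_le
    rintro s (⟨p, rfl⟩ | ⟨p, rfl⟩)
    · rw [h1]
      exact conv_mem D.B α D.sigmaEps (fun w => (memB w).1) _
    · rw [h3]
      exact conv_mem D.B αinv D.sigmaEpsInv (fun w => (memB w).2) _
  · apply Algebra.adjoin_le
    rintro s (⟨p, rfl⟩ | ⟨p, rfl⟩)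
    · rw [h2]
      exact conv_mem _ αinv (D.sigma α) (fun w => (memG w).1) _
    · rw [h4]
      exact conv_mem _ α (D.sigmaInv αinv) (fun w => (memG w).2) _
end
end

section
/- For any Hopf algebra H, the generic base algebra B_H is a left coideal subalgebra of S(t_H)_Θ, i.e., Δ(B_H) ⊆ S(t_H)_Θ ⊗ B_H. -/
open TensorProduct

noncomputable section

variable (k : Type) [Field k]

variable (C : Type) [AddCommGroup C] [Module k C] [Coalgebra k C]

/-! In Sweedler notation `Δ t_x = t_{x₁} ⊗ t_{x₂}` and `Δ t⁻¹_x = t⁻¹_{x₂} ⊗ t⁻¹_{x₁}`. For a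
comultiplicative `f` (such as `t_x t_y` or `t_{xy}`) and an anti-comultiplicative `g` (such as
`t⁻¹_{xy}` or `t⁻¹_x t⁻¹_y`), coassociativity gives `Δ (f * g)(c) = f(c₁) g(c₃) ⊗ (f * g)(c₂)`,
i.e. `Δ ∘ (f * g) = (f ⊗ 1) * (1 ⊗ (f * g)) * (g ⊗ 1)` in the convolution algebra of maps into
`T ⊗ T`. Each factor takes values in the subalgebra `T ⊗ B_H`, hence so do `Δ σ` and `Δ σ⁻¹`; as
`Δ` is an algebra map, it sends all of `B_H` into `T ⊗ B_H`. -/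

open Coalgebra LinearMap WithConv

section Convolution

variable {k} {C A : Type} [AddCommGroup C] [Module k C] [Coalgebra k C] [Ring A] [Algebra k A]

lemma conv_eq_ofConv_mul (f g : C →ₗ[k] A) : conv k f g = (toConv f * toConv g).ofConv := rfl

lemma conv_apply_mem (S : Subalgebra k A) {f g : C →ₗ[k] A} (hf : ∀ c, f c ∈ S)
    (hg : ∀ c, g c ∈ S) (c : C) : conv k f g c ∈ S := by
  simp only [conv, comp_apply]
  induction comul (R := k) c using TensorProduct.induction_on with
  | zero => simp
  | tmul a b => simpa using mul_mem (hf a) (hg b)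
  | add u v hu hv => simpa using add_mem hu hv

end Convolution

section TensorSubalgebra

variable {R A B : Type} [CommSemiring R] [Semiring A] [Algebra R A] [Semiring B] [Algebra R B]

lemma range_map_id_subtype (S : Subalgebra R B) :
    LinearMap.range (map (LinearMap.id : A →ₗ[R] A) (Subalgebra.toSubmodule S).subtype)
      = Subalgebra.toSubmodule (Algebra.TensorProduct.map (AlgHom.id R A) S.val).range :=
  rfl

lemma tmul_one_mem_range_map_id_val (S : Subalgebra R B) (a : A) :
    a ⊗ₜ[R] 1 ∈ (Algebra.TensorProduct.map (AlgHom.id R A) S.val).range :=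
  ⟨a ⊗ₜ 1, by simp⟩

lemma one_tmul_mem_range_map_id_val {S : Subalgebra R B} {b : B} (hb : b ∈ S) :
    (1 : A) ⊗ₜ[R] b ∈ (Algebra.TensorProduct.map (AlgHom.id R A) S.val).range :=
  ⟨1 ⊗ₜ ⟨b, hb⟩, by simp⟩

end TensorSubalgebra

lemma TensorProduct.apply_mem_of_forall_tmul_mem {R M N P : Type} [CommSemiring R]
    [AddCommMonoid M] [Module R M] [AddCommMonoid N] [Module R N] [AddCommMonoid P] [Module R P]
    {φ : M ⊗[R] N →ₗ[R] P} {S : Submodule R P} (h : ∀ m n, φ (m ⊗ₜ n) ∈ S) (x : M ⊗[R] N) :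
    φ x ∈ S := by
  induction x using TensorProduct.induction_on with
  | zero => simp
  | tmul m n => exact h m n
  | add x y hx hy => simpa using add_mem hx hy

section Comultiplicative

variable {R A C D : Type} [CommSemiring R] [Semiring A] [Bialgebra R A]
  [AddCommMonoid C] [Module R C] [Coalgebra R C] [AddCommMonoid D] [Module R D] [Coalgebra R D]

lemma comul_comp_mul'_map {f : C →ₗ[R] A} {g : D →ₗ[R] A} (hf : comul ∘ₗ f = map f f ∘ₗ comul)
    (hg : comul ∘ₗ g = map g g ∘ₗ comul) :
    comul ∘ₗ mul' R A ∘ₗ map f g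
      = map (mul' R A ∘ₗ map f g) (mul' R A ∘ₗ map f g) ∘ₗ comul := by
  ext x y
  have hx := congr($hf x)
  have hy := congr($hg y)
  simp only [comp_apply] at hx hy
  simp [hx, hy, ← (ℛ R x).eq, ← (ℛ R y).eq, sum_tmul, tmul_sum, Finset.sum_mul_sum,
    Finset.sum_comm (s := (ℛ R x).index)]

lemma comul_comp_mul'_map_of_comm {f : C →ₗ[R] A} {g : D →ₗ[R] A}
    (hf : comul ∘ₗ f = map f f ∘ₗ (TensorProduct.comm R C C).toLinearMap ∘ₗ comul)
    (hg : comul ∘ₗ g = map g g ∘ₗ (TensorProduct.comm R D D).toLinearMap ∘ₗ comul) :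
    comul ∘ₗ mul' R A ∘ₗ map f g
      = map (mul' R A ∘ₗ map f g) (mul' R A ∘ₗ map f g)
          ∘ₗ (TensorProduct.comm R (C ⊗[R] D) (C ⊗[R] D)).toLinearMap ∘ₗ comul := by
  ext x y
  have hx := congr($hf x)
  have hy := congr($hg y)
  simp only [comp_apply] at hx hy
  simp [hx, hy, ← (ℛ R x).eq, ← (ℛ R y).eq, sum_tmul, tmul_sum, Finset.sum_mul_sum,
    Finset.sum_comm (s := (ℛ R x).index)]

variable {C' : Type} [AddCommMonoid C'] [Module R C'] [Coalgebra R C']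

lemma comul_comp_coalgHom {f : C →ₗ[R] A} (hf : comul ∘ₗ f = map f f ∘ₗ comul)
    (φ : C' →ₗc[R] C) :
    comul ∘ₗ f ∘ₗ (φ : C' →ₗ[R] C) = map (f ∘ₗ φ) (f ∘ₗ φ) ∘ₗ comul := by
  have hφ : map (φ : C' →ₗ[R] C) φ ∘ₗ comul = comul ∘ₗ (φ : C' →ₗ[R] C) := φ.map_comp_comul
  rw [← comp_assoc, hf, comp_assoc, ← hφ, map_comp, comp_assoc]

lemma comul_comp_coalgHom_of_comm {f : C →ₗ[R] A}
    (hf : comul ∘ₗ f = map f f ∘ₗ (TensorProduct.comm R C C).toLinearMap ∘ₗ comul)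
    (φ : C' →ₗc[R] C) :
    comul ∘ₗ f ∘ₗ (φ : C' →ₗ[R] C)
      = map (f ∘ₗ φ) (f ∘ₗ φ) ∘ₗ (TensorProduct.comm R C' C').toLinearMap ∘ₗ comul := by
  have hφ : map (φ : C' →ₗ[R] C) φ ∘ₗ comul = comul ∘ₗ (φ : C' →ₗ[R] C) := φ.map_comp_comul
  rw [← comp_assoc, hf, comp_assoc, comp_assoc, ← hφ, ← comp_assoc _ (map _ _),
    ← map_comp_comm_eq, map_comp]
  simp only [comp_assoc]

end Comultiplicative

section Factorization

variable {k} {C A : Type} [AddCommGroup C] [Module k C] [Coalgebra k C] [Ring A] [Bialgebra k A]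

local notation "ι₁" => AlgHom.toLinearMap (Algebra.TensorProduct.includeLeft : A →ₐ[k] A ⊗[k] A)
local notation "ι₂" => AlgHom.toLinearMap (Algebra.TensorProduct.includeRight : A →ₐ[k] A ⊗[k] A)

lemma conv_includeLeft_includeRight (f g : C →ₗ[k] A) :
    conv k (ι₁ ∘ₗ f) (ι₂ ∘ₗ g) = map f g ∘ₗ comul := by
  simp only [conv, ← comp_assoc]
  congr 1
  ext a b
  simp

lemma conv_includeRight_includeLeft (f g : C →ₗ[k] A) :
    conv k (ι₂ ∘ₗ f) (ι₁ ∘ₗ g) = map g f ∘ₗ (TensorProduct.comm k C C).toLinearMap ∘ₗ comul := by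
  simp only [conv, ← comp_assoc]
  congr 1
  ext a b
  simp

lemma comul_comp_conv {f g : C →ₗ[k] A} (hf : comul ∘ₗ f = map f f ∘ₗ comul)
    (hg : comul ∘ₗ g = map g g ∘ₗ (TensorProduct.comm k C C).toLinearMap ∘ₗ comul) :
    comul ∘ₗ conv k f g = conv k (conv k (ι₁ ∘ₗ f) (ι₂ ∘ₗ conv k f g)) (ι₁ ∘ₗ g) := by
  have hΔ : comul ∘ₗ conv k f g = conv k (comul ∘ₗ f) (comul ∘ₗ g) :=
    algHom_comp_convMul_distrib (Bialgebra.comulAlgHom k A) (toConv f) (toConv g)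
  have hι₂ : ι₂ ∘ₗ conv k f g = conv k (ι₂ ∘ₗ f) (ι₂ ∘ₗ g) :=
    algHom_comp_convMul_distrib _ (toConv f) (toConv g)
  rw [hΔ, hf, hg, hι₂, ← conv_includeLeft_includeRight, ← conv_includeRight_includeLeft]
  simp only [conv_eq_ofConv_mul, toConv_ofConv, mul_assoc]

lemma comul_conv_mem_range_map_id_val {f g : C →ₗ[k] A} (hf : comul ∘ₗ f = map f f ∘ₗ comul)
    (hg : comul ∘ₗ g = map g g ∘ₗ (TensorProduct.comm k C C).toLinearMap ∘ₗ comul)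
    {S : Subalgebra k A} (hfg : ∀ c, conv k f g c ∈ S) (c : C) :
    comul (conv k f g c) ∈ (Algebra.TensorProduct.map (AlgHom.id k A) S.val).range := by
  rw [← comp_apply (f := comul), comul_comp_conv hf hg]
  refine conv_apply_mem _ (conv_apply_mem _ ?_ ?_) ?_ c
  · exact fun c ↦ tmul_one_mem_range_map_id_val S (f c)
  · exact fun c ↦ one_tmul_mem_range_map_id_val (hfg c)
  · exact fun c ↦ tmul_one_mem_range_map_id_val S (g c)

end Factorization

namespace TakData

variable {k} {H : Type} [Ring H] [HopfAlgebra k H] {T : Type} [CommRing T] [HopfAlgebra k T]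
  (D : TakData k H T)

lemma comul_comp_tt : comul ∘ₗ D.tt = map D.tt D.tt ∘ₗ comul :=
  comul_comp_mul'_map D.comul_t D.comul_t

lemma comul_comp_tMul : comul ∘ₗ D.tMul = map D.tMul D.tMul ∘ₗ comul :=
  comul_comp_coalgHom D.comul_t (Bialgebra.mulCoalgHom k H)

lemma comul_comp_tinvMul :
    comul ∘ₗ D.tinvMul
      = map D.tinvMul D.tinvMul ∘ₗ (TensorProduct.comm k _ _).toLinearMap ∘ₗ comul :=
  comul_comp_coalgHom_of_comm D.comul_tinv (Bialgebra.mulCoalgHom k H)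

lemma comul_comp_tinvtinv :
    comul ∘ₗ D.tinvtinv
      = map D.tinvtinv D.tinvtinv ∘ₗ (TensorProduct.comm k _ _).toLinearMap ∘ₗ comul :=
  comul_comp_mul'_map_of_comm D.comul_tinv D.comul_tinv

lemma sigmaEps_mem_B (c : H ⊗[k] H) : D.sigmaEps c ∈ D.B :=
  apply_mem_of_forall_tmul_mem (S := Subalgebra.toSubmodule D.B)
    (fun x y ↦ Algebra.subset_adjoin (Or.inl ⟨(x, y), rfl⟩)) c

lemma sigmaEpsInv_mem_B (c : H ⊗[k] H) : D.sigmaEpsInv c ∈ D.B :=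
  apply_mem_of_forall_tmul_mem (S := Subalgebra.toSubmodule D.B)
    (fun x y ↦ Algebra.subset_adjoin (Or.inr ⟨(x, y), rfl⟩)) c

end TakData

/-- The generic base algebra `B_H` is a left coideal subalgebra of
`S(t_H)_Θ`: for every `b ∈ B_H`, `Δ(b)` lies in the image of `S(t_H)_Θ ⊗ B_H`. -/
theorem genBase_is_left_coideal_subalgebra
    {H : Type} [Ring H] [HopfAlgebra k H]
    {T : Type} [CommRing T] [HopfAlgebra k T] (D : TakData k H T) :
    ∀ b ∈ D.B,
      Coalgebra.comul (R := k) b ∈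
        LinearMap.range
          (TensorProduct.map (LinearMap.id : T →ₗ[k] T)
            (Subalgebra.toSubmodule D.B).subtype) := by
  rw [range_map_id_subtype]
  suffices D.B ≤ (Algebra.TensorProduct.map (AlgHom.id k T) D.B.val).range.comap
      (Bialgebra.comulAlgHom k T) from fun b hb ↦ this hb
  refine Algebra.adjoin_le ?_
  rintro _ (⟨⟨x, y⟩, rfl⟩ | ⟨⟨x, y⟩, rfl⟩)
  · exact comul_conv_mem_range_map_id_val D.comul_comp_tt D.comul_comp_tinvMul D.sigmaEps_mem_B _
  · exact comul_conv_mem_range_map_id_val D.comul_comp_tMul D.comul_comp_tinvtinv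
      D.sigmaEpsInv_mem_B _
end
end
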